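/- If (X_t) is a Markov chain with kernel P on Θ and stationary measure μ_Θ, θ := inf{t : X_t ∈ A} is the hitting time of a set A, and t₁, t₂ ∈ ℕ satisfy Pr_x[θ ≥ t₂] ≤ 1/8 for all starting points x ∈ Θ and sup_{y ∈ A} ‖δ_y P^{t₁} − μ_Θ‖_TV ≤ 1/8, then sup_{x ∈ Θ} ‖δ_x P^{t₁+t₂} − μ_Θ‖_TV ≤ 1/4. -/

import Mathlib

/-!
Let `θ` be the first time the chain started at `x` visits `A`. On `{θ = t}` with `t < t₂`, the
Markov property at time `t` makes `X_{t₁+t₂}` distributed as `δ_y P^{t₁} P^{t₂-t}` with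
`y = X_t ∈ A`; since `δ_y P^{t₁}` is `1/8`-close to `μ` and TV distance to the invariant `μ` does
not increase under `P`, so is this law. The event `{θ ≥ t₂}` has probability at most `1/8`.
It suffices to bound `P^{t₁+t₂}(x, S) ≤ μ(S) + 1/4` for every `S`: between probability measures,
the reverse inequality follows by passing to complements.
-/

open MeasureTheory ProbabilityTheory
open scoped ENNReal

/-- `kpow P t` is the `t`-step kernel `P^t`. -/
noncomputable def kpow {X : Type*} [MeasurableSpace X] (P : Kernel X X) : ℕ → Kernel X X
  | 0 => Kernel.id
  | n + 1 => (kpow P n) ∘ₖ P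

/-- Total variation distance between two measures. -/
noncomputable def tvDist {X : Type*} [MeasurableSpace X] (μ ν : Measure X) : ℝ :=
  ⨆ A : {A : Set X // MeasurableSet A}, |(μ A.1).toReal - (ν A.1).toReal|

/-- The σ-algebra on trajectory space generated by the first `n+1` coordinates. -/
def pastMS (X : Type*) [MeasurableSpace X] (n : ℕ) : MeasurableSpace (ℕ → X) :=
  MeasurableSpace.comap (fun ω => fun i : Fin (n + 1) => ω (i : ℕ)) inferInstance

/-- `Pr` is the law of a Markov chain on trajectory space with transition kernel `P`. -/
structure IsMarkovChainWithKernel {X : Type*} [MeasurableSpace X] (P : Kernel X X)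
    (Pr : Measure (ℕ → X)) : Prop where
  markov : ∀ (n : ℕ) (A : Set X), MeasurableSet A → ∀ B : Set (ℕ → X),
    MeasurableSet[pastMS X n] B →
    Pr ({ω | ω (n + 1) ∈ A} ∩ B) = ∫⁻ ω in B, P (ω n) A ∂Pr

namespace ProbabilityTheory.Kernel

variable {X : Type*} [MeasurableSpace X] {κ : Kernel X X}

instance isMarkovKernel_pow [IsMarkovKernel κ] : ∀ n : ℕ, IsMarkovKernel (κ ^ n)
  | 0 => by rw [pow_zero]; exact inferInstanceAs (IsMarkovKernel Kernel.id)
  | n + 1 => by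
    rw [pow_succ]; have := isMarkovKernel_pow n; exact inferInstanceAs (IsMarkovKernel (_ ∘ₖ _))

theorem Invariant.pow {μ : Measure X} (hκ : κ.Invariant μ) : ∀ n : ℕ, (κ ^ n).Invariant μ
  | 0 => by rw [pow_zero]; exact Measure.id_comp
  | n + 1 => by rw [pow_succ]; exact (hκ.pow n).comp hκ

end ProbabilityTheory.Kernel

theorem kpow_eq_pow {X : Type*} [MeasurableSpace X] (P : Kernel X X) : ∀ n, kpow P n = P ^ n
  | 0 => rfl
  | n + 1 => by rw [kpow, kpow_eq_pow P n, pow_succ]; rfl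

section TotalVariation

variable {X : Type*} [MeasurableSpace X] {ν μ : Measure X}

theorem ENNReal.le_add_ofReal_iff_toReal_le {a b : ℝ≥0∞} (ha : a ≠ ∞) (hb : b ≠ ∞) {ε : ℝ}
    (hε : 0 ≤ ε) : a ≤ b + ENNReal.ofReal ε ↔ a.toReal ≤ b.toReal + ε := by
  rw [← ENNReal.toReal_le_toReal ha (by finiteness), ENNReal.toReal_add hb ENNReal.ofReal_ne_top,
    ENNReal.toReal_ofReal hε]

theorem abs_sub_le_tvDist [IsFiniteMeasure ν] [IsFiniteMeasure μ] {S : Set X}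
    (hS : MeasurableSet S) : |(ν S).toReal - (μ S).toReal| ≤ tvDist ν μ := by
  have hbdd : BddAbove (Set.range fun T : {T : Set X // MeasurableSet T} =>
      |(ν T.1).toReal - (μ T.1).toReal|) := by
    refine ⟨ν.real .univ + μ.real .univ, ?_⟩
    rintro _ ⟨⟨T, -⟩, rfl⟩
    refine (abs_sub _ _).trans ?_
    simp only [abs_of_nonneg ENNReal.toReal_nonneg]
    exact add_le_add (measureReal_mono (Set.subset_univ T)) (measureReal_mono (Set.subset_univ T))
  exact le_ciSup hbdd ⟨S, hS⟩

theorem tvDist_nonneg [IsFiniteMeasure ν] [IsFiniteMeasure μ] : 0 ≤ tvDist ν μ :=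
  (abs_nonneg _).trans (abs_sub_le_tvDist MeasurableSet.empty)

theorem le_add_of_tvDist_le [IsFiniteMeasure ν] [IsFiniteMeasure μ] {ε : ℝ}
    (h : tvDist ν μ ≤ ε) {S : Set X} (hS : MeasurableSet S) :
    ν S ≤ μ S + ENNReal.ofReal ε := by
  rw [ENNReal.le_add_ofReal_iff_toReal_le (measure_ne_top ν S) (measure_ne_top μ S)
    (tvDist_nonneg.trans h)]
  linarith [le_abs_self ((ν S).toReal - (μ S).toReal), (abs_sub_le_tvDist hS).trans h]

theorem le_add_of_forall_le_add [IsProbabilityMeasure ν] [IsProbabilityMeasure μ] {ε : ℝ≥0∞}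
    (h : ∀ S, MeasurableSet S → ν S ≤ μ S + ε) {S : Set X} (hS : MeasurableSet S) :
    μ S ≤ ν S + ε := by
  refine ENNReal.le_of_add_le_add_right (measure_ne_top ν Sᶜ) ?_
  calc μ S + ν Sᶜ ≤ μ S + (μ Sᶜ + ε) := by gcongr; exact h _ hS.compl
    _ = ν S + ν Sᶜ + ε := by
      rw [← add_assoc, measure_add_measure_compl hS, measure_add_measure_compl hS,
        measure_univ, measure_univ]
    _ = ν S + ε + ν Sᶜ := add_right_comm _ _ _

theorem tvDist_le_of_forall_le_add [IsProbabilityMeasure ν] [IsProbabilityMeasure μ] {ε : ℝ}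
    (hε : 0 ≤ ε) (h : ∀ S, MeasurableSet S → ν S ≤ μ S + ENNReal.ofReal ε) :
    tvDist ν μ ≤ ε := by
  have : Nonempty {S : Set X // MeasurableSet S} := ⟨⟨∅, MeasurableSet.empty⟩⟩
  refine ciSup_le fun ⟨S, hS⟩ => abs_sub_le_iff.mpr ⟨?_, ?_⟩
  · have := (ENNReal.le_add_ofReal_iff_toReal_le (measure_ne_top ν S) (measure_ne_top μ S) hε).mp
      (h S hS)
    linarith
  · have := (ENNReal.le_add_ofReal_iff_toReal_le (measure_ne_top μ S) (measure_ne_top ν S) hε).mp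
      (le_add_of_forall_le_add h hS)
    linarith

theorem lintegral_le_add_of_forall_le_add {ε : ℝ≥0∞}
    (h : ∀ S, MeasurableSet S → ν S ≤ μ S + ε) {g : X → ℝ≥0∞} (hg : Measurable g)
    (hg1 : ∀ x, g x ≤ 1) : ∫⁻ x, g x ∂ν ≤ ∫⁻ x, g x ∂μ + ε := by
  have hlayer : ∀ ρ : Measure X,
      ∫⁻ x, g x ∂ρ = ∫⁻ t in Set.Ioc (0 : ℝ) 1, ρ {x | t < (g x).toReal} := by
    intro ρ
    have hempty : ∀ t ∈ Set.Ioi (1 : ℝ), ρ {x | t < (g x).toReal} = 0 := fun t ht => by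
      convert measure_empty (μ := ρ)
      refine Set.eq_empty_of_forall_notMem fun x (hx : t < (g x).toReal) => ?_
      have := ENNReal.toReal_mono ENNReal.one_ne_top (hg1 x)
      rw [ENNReal.toReal_one] at this
      linarith [Set.mem_Ioi.mp ht]
    calc ∫⁻ x, g x ∂ρ = ∫⁻ x, ENNReal.ofReal (g x).toReal ∂ρ :=
          lintegral_congr fun x => (ENNReal.ofReal_toReal (ne_top_of_le_ne_top
            ENNReal.one_ne_top (hg1 x))).symm
      _ = _ := by
        rw [lintegral_eq_lintegral_meas_lt ρ (.of_forall fun _ => ENNReal.toReal_nonneg)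
            hg.ennreal_toReal.aemeasurable, ← Set.Ioc_union_Ioi_eq_Ioi zero_le_one,
          lintegral_union measurableSet_Ioi (Set.Ioc_disjoint_Ioi le_rfl),
          setLIntegral_congr_fun measurableSet_Ioi hempty, lintegral_zero, add_zero]
  calc ∫⁻ x, g x ∂ν ≤ ∫⁻ t in Set.Ioc (0 : ℝ) 1, (μ {x | t < (g x).toReal} + ε) := by
        rw [hlayer ν]
        exact lintegral_mono fun t => h _ (hg.ennreal_toReal measurableSet_Ioi)
    _ = ∫⁻ x, g x ∂μ + ε := by
        rw [lintegral_add_right _ measurable_const, setLIntegral_const, Real.volume_Ioc,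
          hlayer μ]
        norm_num

theorem ProbabilityTheory.Kernel.Invariant.tvDist_comp_le [IsProbabilityMeasure ν]
    [IsProbabilityMeasure μ] {κ : Kernel X X} [IsMarkovKernel κ] (hκ : κ.Invariant μ) :
    tvDist (κ ∘ₘ ν) μ ≤ tvDist ν μ := by
  refine tvDist_le_of_forall_le_add tvDist_nonneg fun S hS => ?_
  have hμ : μ S = ∫⁻ x, κ x S ∂μ := by
    conv_lhs => rw [← hκ.def]
    exact Measure.bind_apply hS κ.aemeasurable
  rw [Measure.bind_apply hS κ.aemeasurable, hμ]
  exact lintegral_le_add_of_forall_le_add (fun _ => le_add_of_tvDist_le le_rfl)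
    (κ.measurable_coe hS) fun _ => prob_le_one

theorem ProbabilityTheory.Kernel.Invariant.tvDist_pow_add_le [IsProbabilityMeasure μ]
    {κ : Kernel X X} [IsMarkovKernel κ] (hκ : κ.Invariant μ) (m n : ℕ) (x : X) :
    tvDist ((κ ^ (m + n)) x) μ ≤ tvDist ((κ ^ n) x) μ := by
  rw [pow_add, Kernel.comp_apply]
  exact (hκ.pow m).tvDist_comp_le

end TotalVariation

section MarkovChain

variable {X : Type*} [MeasurableSpace X]

theorem measurable_pastMS_eval {i n : ℕ} (hi : i ≤ n) :
    Measurable[pastMS X n] fun ω : ℕ → X => ω i := by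
  have : Measurable[pastMS X n] fun ω : ℕ → X => fun j : Fin (n + 1) => ω j :=
    Measurable.of_comap_le le_rfl
  exact (measurable_pi_apply (⟨i, Nat.lt_succ_of_le hi⟩ : Fin (n + 1))).comp this

theorem pastMS_mono : Monotone (pastMS X) := fun _ _ hnm =>
  Measurable.comap_le <| @measurable_pi_lambda _ _ _ (pastMS X _) _ _ fun i =>
    measurable_pastMS_eval (i.is_le.trans hnm)

theorem pastMS_le (n : ℕ) : pastMS X n ≤ MeasurableSpace.pi :=
  Measurable.comap_le <| measurable_pi_lambda _ fun _ => measurable_pi_apply _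

theorem map_eq_dirac_of_measure_fiber_eq_one {Ω : Type*} [MeasurableSpace Ω] {ρ : Measure Ω}
    [IsProbabilityMeasure ρ] {f : Ω → X} (hf : Measurable f) {x : X}
    (h : ρ {ω | f ω = x} = 1) : ρ.map f = Measure.dirac x := by
  have hfull : ∀ S, x ∈ S → ρ (f ⁻¹' S) = 1 := fun S hx =>
    le_antisymm prob_le_one (h ▸ measure_mono fun ω (hω : f ω = x) => show f ω ∈ S from hω ▸ hx)
  ext S hS
  rw [Measure.map_apply hf hS, Measure.dirac_apply' x hS]
  by_cases hx : x ∈ S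
  · simp [hx, hfull S hx]
  · simpa [hx, ← prob_compl_eq_one_iff (hf hS)] using hfull Sᶜ hx

namespace IsMarkovChainWithKernel

variable {P : Kernel X X} {Pr : Measure (ℕ → X)} {n : ℕ} {B : Set (ℕ → X)}

theorem map_eval_succ_restrict (hc : IsMarkovChainWithKernel P Pr)
    (hB : MeasurableSet[pastMS X n] B) :
    (Pr.restrict B).map (· (n + 1)) = P ∘ₘ (Pr.restrict B).map (· n) := by
  ext S hS
  rw [Measure.map_apply (measurable_pi_apply _) hS, Measure.bind_apply hS P.aemeasurable,
    lintegral_map (P.measurable_coe hS) (measurable_pi_apply _),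
    Measure.restrict_apply (measurable_pi_apply _ hS)]
  exact hc.markov n S hS B hB

theorem map_eval_add_restrict (hc : IsMarkovChainWithKernel P Pr)
    (hB : MeasurableSet[pastMS X n] B) :
    ∀ k : ℕ, (Pr.restrict B).map (· (n + k)) = (P ^ k) ∘ₘ (Pr.restrict B).map (· n)
  | 0 => (Measure.id_comp).symm
  | k + 1 => by
    rw [← add_assoc, hc.map_eval_succ_restrict (pastMS_mono (Nat.le_add_right n k) B hB),
      hc.map_eval_add_restrict hB k, Measure.comp_assoc, pow_succ']
    rfl

theorem measure_eval_mem_inter (hc : IsMarkovChainWithKernel P Pr)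
    (hB : MeasurableSet[pastMS X n] B) (k : ℕ) {S : Set X} (hS : MeasurableSet S) :
    Pr ({ω | ω (n + k) ∈ S} ∩ B) = ∫⁻ ω in B, (P ^ k) (ω n) S ∂Pr := by
  have := DFunLike.congr_fun (hc.map_eval_add_restrict hB k) S
  rwa [Measure.map_apply (measurable_pi_apply _) hS,
    Measure.restrict_apply (measurable_pi_apply _ hS), Measure.bind_apply hS (P ^ k).aemeasurable,
    lintegral_map ((P ^ k).measurable_coe hS) (measurable_pi_apply _)] at this

theorem map_eval (hc : IsMarkovChainWithKernel P Pr) [IsProbabilityMeasure Pr] {x : X}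
    (hstart : Pr {ω | ω 0 = x} = 1) (k : ℕ) : Pr.map (· k) = (P ^ k) x := by
  have := hc.map_eval_add_restrict (n := 0) MeasurableSet.univ k
  rwa [Measure.restrict_univ, zero_add,
    map_eq_dirac_of_measure_fiber_eq_one (measurable_pi_apply 0) hstart,
    Measure.dirac_bind (P ^ k).measurable] at this

end IsMarkovChainWithKernel

end MarkovChain

theorem sum_setLIntegral_le_of_pairwiseDisjoint {Ω ι : Type*} [MeasurableSpace Ω]
    {ρ : Measure Ω} [IsProbabilityMeasure ρ] {s : Finset ι} {H : ι → Set Ω}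
    (hd : (s : Set ι).PairwiseDisjoint H) (hm : ∀ i ∈ s, MeasurableSet (H i))
    {f : ι → Ω → ℝ≥0∞} {c : ℝ≥0∞} (h : ∀ i ∈ s, ∀ ω ∈ H i, f i ω ≤ c) :
    ∑ i ∈ s, ∫⁻ ω in H i, f i ω ∂ρ ≤ c :=
  calc ∑ i ∈ s, ∫⁻ ω in H i, f i ω ∂ρ ≤ ∑ i ∈ s, c * ρ (H i) :=
        Finset.sum_le_sum fun i hi =>
          (setLIntegral_mono measurable_const (h i hi)).trans_eq (setLIntegral_const _ _)
    _ = c * ρ (⋃ i ∈ s, H i) := by rw [← Finset.mul_sum, measure_biUnion_finset hd hm]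
    _ ≤ c := mul_le_of_le_one_right' prob_le_one

section HittingTime

variable {X : Type*} {A : Set X}

def firstHitAt (A : Set X) (t : ℕ) : Set (ℕ → X) := {ω | ω t ∈ A ∧ ∀ s < t, ω s ∉ A}

theorem measurableSet_pastMS_firstHitAt [MeasurableSpace X] (hA : MeasurableSet A) (t : ℕ) :
    MeasurableSet[pastMS X t] (firstHitAt A t) := by
  have hmem : ∀ s ≤ t, MeasurableSet[pastMS X t] {ω : ℕ → X | ω s ∈ A} := fun s hs =>
    measurable_pastMS_eval hs hA
  have hdecomp : firstHitAt A t = {ω | ω t ∈ A} ∩ ⋂ s ∈ Finset.range t, {ω | ω s ∈ A}ᶜ := by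
    ext ω
    simp [firstHitAt]
  rw [hdecomp]
  exact (hmem t le_rfl).inter <|
    Finset.measurableSet_biInter _ fun s hs => (hmem s (Finset.mem_range.mp hs).le).compl

theorem pairwise_disjoint_firstHitAt (A : Set X) :
    Pairwise fun s t => Disjoint (firstHitAt A s) (firstHitAt A t) := by
  intro s t hst
  refine Set.disjoint_left.mpr fun ω hs ht => ?_
  rcases hst.lt_or_gt with h | h
  · exact ht.2 s h hs.1
  · exact hs.2 t h ht.1

theorem exists_mem_firstHitAt {n : ℕ} {ω : ℕ → X} (h : ∃ t < n, ω t ∈ A) :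
    ∃ t < n, ω ∈ firstHitAt A t := by
  classical
  obtain ⟨t, htn, htA⟩ := h
  have hex : ∃ s, ω s ∈ A := ⟨t, htA⟩
  exact ⟨Nat.find hex, (Nat.find_min' hex htA).trans_lt htn, Nat.find_spec hex,
    fun s hs => Nat.find_min hex hs⟩

theorem IsMarkovChainWithKernel.measure_eval_mem_le [MeasurableSpace X] {P : Kernel X X}
    {Pr : Measure (ℕ → X)} (hc : IsMarkovChainWithKernel P Pr) (hA : MeasurableSet A)
    {n T : ℕ} (hnT : n ≤ T) {S : Set X} (hS : MeasurableSet S) :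
    Pr {ω | ω T ∈ S} ≤ ∑ t ∈ Finset.range n, ∫⁻ ω in firstHitAt A t, (P ^ (T - t)) (ω t) S ∂Pr +
      Pr {ω | ∀ t < n, ω t ∉ A} := by
  have hcover : {ω | ω T ∈ S} ⊆ (⋃ t ∈ Finset.range n, {ω | ω T ∈ S} ∩ firstHitAt A t) ∪
      {ω | ∀ t < n, ω t ∉ A} := by
    intro ω hω
    by_cases hhit : ∃ t < n, ω t ∈ A
    · obtain ⟨t, htn, ht⟩ := exists_mem_firstHitAt hhit
      exact Or.inl (Set.mem_biUnion (Finset.mem_range.mpr htn) ⟨hω, ht⟩)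
    · exact Or.inr fun t htn htA => hhit ⟨t, htn, htA⟩
  calc Pr {ω | ω T ∈ S}
      ≤ ∑ t ∈ Finset.range n, Pr ({ω | ω T ∈ S} ∩ firstHitAt A t) + Pr {ω | ∀ t < n, ω t ∉ A} :=
        (measure_mono hcover).trans <| (measure_union_le _ _).trans <|
          add_le_add_left (measure_biUnion_finset_le _ _) _
    _ = _ := by
        congr 1
        refine Finset.sum_congr rfl fun t ht => ?_
        have := hc.measure_eval_mem_inter (measurableSet_pastMS_firstHitAt hA t) (T - t) hS
        rwa [Nat.add_sub_cancel' ((Finset.mem_range.mp ht).le.trans hnT)] at this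

end HittingTime

/-- let `(X_t)` be a Markov chain with kernel `P` on `Θ` with stationary
measure `μ_Θ`, `θ = inf{t : X_t ∈ A}` the hitting time of `A`. If
`Pr_x[θ ≥ t₂] ≤ 1/8` for all starting points `x` and
`‖δ_y P^{t₁} − μ_Θ‖_TV ≤ 1/8` for all `y ∈ A`, then
`‖δ_x P^{t₁+t₂} − μ_Θ‖_TV ≤ 1/4` for all `x`. -/
theorem hitting_time_mixing_bound {Θ : Type*} [MeasurableSpace Θ]
    (P : Kernel Θ Θ) [IsMarkovKernel P]
    (μ : Measure Θ) [IsProbabilityMeasure μ] (hinv : μ.bind (fun x => P x) = μ)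
    (A : Set Θ) (hA : MeasurableSet A) (t₁ t₂ : ℕ)
    (Pr : Θ → Measure (ℕ → Θ)) (hprob : ∀ x, IsProbabilityMeasure (Pr x))
    (hchain : ∀ x, IsMarkovChainWithKernel P (Pr x))
    (hstart : ∀ x, Pr x {ω | ω 0 = x} = 1)
    (hhit : ∀ x, Pr x {ω | ∀ t < t₂, ω t ∉ A} ≤ 1 / 8)
    (hmix : ∀ y ∈ A, tvDist ((kpow P t₁) y) μ ≤ 1 / 8) :
    ∀ x, tvDist ((kpow P (t₁ + t₂)) x) μ ≤ 1 / 4 := by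
  intro x
  have := hprob x
  have hP : P.Invariant μ := hinv
  have h8 : ENNReal.ofReal (1 / 8) = 1 / 8 := by
    rw [ENNReal.ofReal_div_of_pos (by norm_num)]
    simp
  rw [kpow_eq_pow]
  refine tvDist_le_of_forall_le_add (by norm_num) fun S hS => ?_
  have hafter : ∀ t < t₂, ∀ ω ∈ firstHitAt A t, (P ^ (t₁ + t₂ - t)) (ω t) S ≤ μ S + 1 / 8 := by
    intro t ht ω hω
    rw [show t₁ + t₂ - t = t₂ - t + t₁ by omega, ← h8]
    exact le_add_of_tvDist_le
      ((hP.tvDist_pow_add_le _ _ _).trans (kpow_eq_pow P t₁ ▸ hmix _ hω.1)) hS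
  calc (P ^ (t₁ + t₂)) x S = Pr x {ω | ω (t₁ + t₂) ∈ S} := by
        rw [← (hchain x).map_eval (hstart x), Measure.map_apply (measurable_pi_apply _) hS]
        rfl
    _ ≤ _ := (hchain x).measure_eval_mem_le hA (Nat.le_add_left t₂ t₁) hS
    _ ≤ μ S + 1 / 8 + 1 / 8 :=
        add_le_add (sum_setLIntegral_le_of_pairwiseDisjoint
          ((pairwise_disjoint_firstHitAt A).set_pairwise _)
          (fun t _ => pastMS_le t _ (measurableSet_pastMS_firstHitAt hA t))
          fun t ht => hafter t (Finset.mem_range.mp ht)) (hhit x)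
    _ = μ S + ENNReal.ofReal (1 / 4) := by
        rw [add_assoc, ← h8, ← ENNReal.ofReal_add (by norm_num) (by norm_num)]
        norm_num
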